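/- For every real θ, the integral over x ∈ (0, ∞) of (1 − exp(−θ²·x²))·exp(−x)/x with respect to Lebesgue measure equals (1/2) times the integral over z ∈ ℝ of log(1 + 2·θ²·z²) against the standard Gaussian density (1/√(2π))·exp(−z²/2). -/

import Mathlib

/-!
With `Z` standard Gaussian and `a = √2 θ`, the characteristic function gives
`1 - exp (-θ² x²) = 𝔼[1 - cos (a Z x)]`. Since `1 - cos u ≤ |u|`, Fubini applies, and the
inner integral is the Frullani-type identity
`∫₀^∞ (1 - cos (c x)) e^{-x} dx / x = log (1 + c²) / 2`, which follows by writing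
`(1 - cos (c x)) / x = ∫₀^c sin (s x) ds`, swapping once more and using the Laplace transform
`∫₀^∞ sin (s x) e^{-x} dx = s / (1 + s²)`.
-/

open MeasureTheory Real Set ProbabilityTheory
open scoped NNReal

lemma abs_one_sub_cos_le_abs (u : ℝ) : |1 - cos u| ≤ |u| := by
  simpa [abs_sub_comm] using abs_cos_sub_cos_le u 0

lemma integral_self_div_one_add_sq (c : ℝ) :
    ∫ s in (0 : ℝ)..c, s / (1 + s ^ 2) = log (1 + c ^ 2) / 2 := by
  have hderiv (s : ℝ) : HasDerivAt (fun s => log (1 + s ^ 2) / 2) (s / (1 + s ^ 2)) s := by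
    refine ((((hasDerivAt_pow 2 s).const_add 1).log (by positivity)).div_const 2).congr_deriv ?_
    field_simp
    ring
  rw [intervalIntegral.integral_eq_sub_of_hasDerivAt (fun s _ => hderiv s)
    ((continuous_id.div (by fun_prop) fun s => by positivity).intervalIntegrable 0 c)]
  simp

-- The imaginary part of `∫₀^∞ e^{(-1 + i s) x} dx = 1 / (1 - i s)`.
lemma integral_Ioi_sin_mul_mul_exp_neg (s : ℝ) :
    ∫ x in Ioi 0, sin (s * x) * exp (-x) = s / (1 + s ^ 2) := by
  set a : ℂ := -1 + s * Complex.I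
  have ha : a.re < 0 := by simp [a]
  have him (x : ℝ) : (Complex.exp (a * x)).im = sin (s * x) * exp (-x) := by
    rw [show a * x = ((-x : ℝ) : ℂ) + ((s * x : ℝ) : ℂ) * Complex.I by push_cast [a]; ring,
      Complex.exp_add, ← Complex.ofReal_exp, Complex.im_ofReal_mul, Complex.exp_ofReal_mul_I_im,
      mul_comm]
  calc ∫ x in Ioi 0, sin (s * x) * exp (-x) = (∫ x : ℝ in Ioi 0, Complex.exp (a * x)).im := by
        simp_rw [← him]; exact integral_im (integrableOn_exp_mul_complex_Ioi ha 0)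
    _ = s / (1 + s ^ 2) := by
        rw [integral_exp_mul_complex_Ioi ha, Complex.ofReal_zero, mul_zero, Complex.exp_zero,
          neg_div, Complex.neg_im, Complex.div_im]
        simp [a, Complex.normSq_apply]
        ring

lemma integral_sin_mul_eq_one_sub_cos_div {x : ℝ} (hx : x ≠ 0) (c : ℝ) :
    ∫ s in (0 : ℝ)..c, sin (s * x) = (1 - cos (c * x)) / x := by
  rw [intervalIntegral.integral_comp_mul_right sin hx, integral_sin, zero_mul, cos_zero,
    smul_eq_mul, inv_mul_eq_div]

lemma integral_Ioi_one_sub_cos_mul_mul_exp_neg_div_of_nonneg {c : ℝ} (hc : 0 ≤ c) :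
    ∫ x in Ioi 0, (1 - cos (c * x)) * exp (-x) / x = log (1 + c ^ 2) / 2 := by
  have hint : Integrable (Function.uncurry fun x s => sin (s * x) * exp (-x))
      ((volume.restrict (Ioi 0)).prod (volume.restrict (Ioc 0 c))) := by
    refine ((integrableOn_exp_neg_Ioi 0).mul_prod
      (integrableOn_const measure_Ioc_lt_top.ne (C := (1 : ℝ)))).mono' (by fun_prop) ?_
    refine .of_forall fun p => ?_
    simp only [Function.uncurry, norm_mul, norm_eq_abs, abs_exp, mul_one]
    exact mul_le_of_le_one_left (exp_pos _).le (abs_sin_le_one _)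
  calc ∫ x in Ioi 0, (1 - cos (c * x)) * exp (-x) / x
      = ∫ x in Ioi 0, ∫ s in Ioc 0 c, sin (s * x) * exp (-x) := by
        refine setIntegral_congr_fun measurableSet_Ioi fun x (hx : 0 < x) => ?_
        rw [← intervalIntegral.integral_of_le hc, intervalIntegral.integral_mul_const,
          integral_sin_mul_eq_one_sub_cos_div hx.ne']
        ring
    _ = ∫ s in Ioc 0 c, ∫ x in Ioi 0, sin (s * x) * exp (-x) := integral_integral_swap hint
    _ = ∫ s in (0 : ℝ)..c, s / (1 + s ^ 2) := by
        rw [intervalIntegral.integral_of_le hc]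
        exact integral_congr_ae (.of_forall integral_Ioi_sin_mul_mul_exp_neg)
    _ = log (1 + c ^ 2) / 2 := integral_self_div_one_add_sq c

lemma integral_Ioi_one_sub_cos_mul_mul_exp_neg_div (c : ℝ) :
    ∫ x in Ioi 0, (1 - cos (c * x)) * exp (-x) / x = log (1 + c ^ 2) / 2 := by
  obtain hc | hc := le_total 0 c
  · exact integral_Ioi_one_sub_cos_mul_mul_exp_neg_div_of_nonneg hc
  · simpa using integral_Ioi_one_sub_cos_mul_mul_exp_neg_div_of_nonneg (neg_nonneg.mpr hc)

section RandomFrequency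

variable {Ω : Type*} [MeasurableSpace Ω] {P : Measure Ω} {X : Ω → ℝ}

lemma integrable_one_sub_cos_mul_mul_exp_neg_div_prod [SFinite P] (hX : Integrable X P) :
    Integrable (fun p : ℝ × Ω => (1 - cos (X p.2 * p.1)) * exp (-p.1) / p.1)
      ((volume.restrict (Ioi 0)).prod P) := by
  refine ((integrableOn_exp_neg_Ioi 0).mul_prod hX.norm).mono' ?_ ?_
  · exact (by fun_prop : Measurable fun q : ℝ × ℝ => (1 - cos (q.2 * q.1)) * exp (-q.1) / q.1)
      |>.comp_aemeasurable (measurable_fst.aemeasurable.prodMk hX.aemeasurable.comp_snd)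
      |>.aestronglyMeasurable
  · rw [Measure.restrict_prod_eq_prod_univ]
    filter_upwards [ae_restrict_mem (measurableSet_Ioi.prod MeasurableSet.univ)]
      with p hp
    replace hp : 0 < p.1 := hp.1
    calc ‖(1 - cos (X p.2 * p.1)) * exp (-p.1) / p.1‖
        = |1 - cos (X p.2 * p.1)| / p.1 * exp (-p.1) := by
          simp only [norm_div, norm_mul, norm_eq_abs, abs_exp, abs_of_pos hp]; ring
      _ ≤ |X p.2 * p.1| / p.1 * exp (-p.1) := by
          gcongr ?_ / _ * _; exact abs_one_sub_cos_le_abs _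
      _ = exp (-p.1) * ‖X p.2‖ := by
          rw [abs_mul, abs_of_pos hp, norm_eq_abs]; field_simp

lemma integral_Ioi_integral_one_sub_cos_mul_mul_exp_neg_div [SFinite P] (hX : Integrable X P) :
    ∫ x in Ioi 0, (∫ ω, (1 - cos (X ω * x)) ∂P) * exp (-x) / x
      = ∫ ω, log (1 + X ω ^ 2) / 2 ∂P := by
  calc ∫ x in Ioi 0, (∫ ω, (1 - cos (X ω * x)) ∂P) * exp (-x) / x
      = ∫ x in Ioi 0, ∫ ω, (1 - cos (X ω * x)) * exp (-x) / x ∂P := by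
        simp_rw [mul_div_assoc, integral_mul_const]
    _ = ∫ ω, (∫ x in Ioi 0, (1 - cos (X ω * x)) * exp (-x) / x) ∂P :=
        integral_integral_swap (integrable_one_sub_cos_mul_mul_exp_neg_div_prod hX)
    _ = ∫ ω, log (1 + X ω ^ 2) / 2 ∂P := by
        simp_rw [integral_Ioi_one_sub_cos_mul_mul_exp_neg_div]

end RandomFrequency

lemma integral_cos_mul_gaussianReal (v : ℝ≥0) (t : ℝ) :
    ∫ z, cos (t * z) ∂gaussianReal 0 v = exp (-(v * t ^ 2 / 2)) := by
  have hint : Integrable (fun z : ℝ => Complex.exp (t * z * Complex.I)) (gaussianReal 0 v) :=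
    .of_bound (by fun_prop) 1
      (.of_forall fun z => by simp [← Complex.ofReal_mul, Complex.norm_exp_ofReal_mul_I])
  calc ∫ z, cos (t * z) ∂gaussianReal 0 v = (charFun (gaussianReal 0 v) t).re := by
        rw [charFun_apply_real, ← RCLike.re_to_complex, ← integral_re hint]
        simp_rw [RCLike.re_to_complex, ← Complex.ofReal_mul, Complex.exp_ofReal_mul_I_re]
    _ = exp (-(v * t ^ 2 / 2)) := by
        rw [charFun_gaussianReal, ← Complex.exp_ofReal_re]
        push_cast
        ring_nf

lemma integral_one_sub_cos_mul_gaussianReal (v : ℝ≥0) (t : ℝ) :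
    ∫ z, (1 - cos (t * z)) ∂gaussianReal 0 v = 1 - exp (-(v * t ^ 2 / 2)) := by
  have hcos : Integrable (fun z => cos (t * z)) (gaussianReal 0 v) :=
    .of_bound (by fun_prop) 1 (.of_forall fun z => by simpa using abs_cos_le_one (t * z))
  rw [integral_sub (integrable_const 1) hcos, integral_const, probReal_univ, one_smul,
    integral_cos_mul_gaussianReal]

lemma integral_gaussianReal_zero_one_eq (f : ℝ → ℝ) :
    ∫ z, f z ∂gaussianReal 0 1 = ∫ z, f z * ((1 / √(2 * π)) * exp (-z ^ 2 / 2)) := by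
  rw [integral_gaussianReal_eq_integral_smul one_ne_zero]
  simp [gaussianPDFReal, mul_comm]

theorem gamma_quadratic_variation_modular (θ : ℝ) :
    ∫ x in Set.Ioi (0 : ℝ), (1 - Real.exp (-θ ^ 2 * x ^ 2)) * Real.exp (-x) / x
      = (1 / 2) * ∫ z : ℝ,
          Real.log (1 + 2 * θ ^ 2 * z ^ 2) *
            ((1 / Real.sqrt (2 * Real.pi)) * Real.exp (-z ^ 2 / 2)) := by
  set a := √2 * θ
  have ha (z : ℝ) : (a * z) ^ 2 = 2 * θ ^ 2 * z ^ 2 := by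
    rw [mul_pow, mul_pow, sq_sqrt zero_le_two]
  have hchar (x : ℝ) :
      ∫ z, (1 - cos (a * z * x)) ∂gaussianReal 0 1 = 1 - exp (-θ ^ 2 * x ^ 2) := by
    simp_rw [mul_right_comm a _ x, integral_one_sub_cos_mul_gaussianReal, ha, NNReal.coe_one]
    ring_nf
  have hX : Integrable (fun z => a * z) (gaussianReal 0 1) :=
    (memLp_id_gaussianReal 1).integrable le_rfl |>.const_mul a
  calc ∫ x in Ioi 0, (1 - exp (-θ ^ 2 * x ^ 2)) * exp (-x) / x
      = ∫ x in Ioi 0, (∫ z, (1 - cos (a * z * x)) ∂gaussianReal 0 1) * exp (-x) / x := by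
        simp_rw [hchar]
    _ = ∫ z, log (1 + (a * z) ^ 2) / 2 ∂gaussianReal 0 1 :=
        integral_Ioi_integral_one_sub_cos_mul_mul_exp_neg_div hX
    _ = _ := by
        simp_rw [ha, integral_div, integral_gaussianReal_zero_one_eq]
        ring
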